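/- Let H be a Hopf algebra over a field F, let L be an H-comodule Lie algebra, and let M be an H-subcomodule of L. Then the centralizer N = {a ∈ L : [a,b] = 0 for all b ∈ M} of M in L is an H-subcomodule of L. -/

import Mathlib

open TensorProduct

noncomputable section

section

attribute [local instance 100] LieRing.ofAssociativeRing

/-- The bracket of a Lie algebra as a linear map on the tensor square. -/
def bracketHom (F L : Type*) [Field F] [LieRing L] [LieAlgebra F L] : L ⊗[F] L →ₗ[F] L :=
  TensorProduct.lift (LieAlgebra.ad F L).toLinearMap

end

/-- A right `H`-comodule structure on an `F`-vector space `V`. -/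
structure HComodule (F H V : Type*) [Field F] [Ring H] [HopfAlgebra F H]
    [AddCommGroup V] [Module F V] where
  ρ : V →ₗ[F] V ⊗[F] H
  coassoc : ∀ x : V, (TensorProduct.assoc F V H H) ((ρ.rTensor H) (ρ x))
      = ((Coalgebra.comul (R := F) (A := H)).lTensor V) (ρ x)
  counit : ∀ x : V,
    (TensorProduct.rid F V) (((Coalgebra.counit (R := F) (A := H)).lTensor V) (ρ x)) = x

/-- An `H`-comodule Lie algebra: a Lie algebra and right `H`-comodule `L` such that
`ρ⁅a,b⁆ = ⁅a₍₀₎,b₍₀₎⁆ ⊗ a₍₁₎b₍₁₎` (Sweedler notation). -/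
structure HComoduleLieAlgebra (F H L : Type*) [Field F] [Ring H] [HopfAlgebra F H]
    [LieRing L] [LieAlgebra F L] extends HComodule F H L where
  compat : ∀ a b : L, ρ ⁅a, b⁆ =
    (TensorProduct.map (bracketHom F L) (LinearMap.mul' F H))
      ((TensorProduct.tensorTensorTensorComm F L H L H) (ρ a ⊗ₜ[F] ρ b))

/-- A subspace `W` is an `H`-subcomodule if `ρ(W) ⊆ W ⊗ H`. -/
def HComodule.IsHSubcomodule {F H V : Type*} [Field F] [Ring H] [HopfAlgebra F H]
    [AddCommGroup V] [Module F V] (C : HComodule F H V) (W : Submodule F V) : Prop :=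
  ∀ x ∈ W, C.ρ x ∈ LinearMap.range (W.subtype.rTensor H)

/-- `t ∈ H*` is a left integral on `H`: `t(a₍₂₎)a₍₁₎ = t(a)1`. -/
def IsLeftIntegral (F H : Type*) [Field F] [Ring H] [HopfAlgebra F H]
    (t : H →ₗ[F] F) : Prop :=
  ∀ a : H, (TensorProduct.rid F H) ((t.lTensor H) (Coalgebra.comul (R := F) a)) = t a • (1 : H)

/-- `t ∈ H*` is ad-invariant: `t(a₍₁₎ b S(a₍₂₎)) = ε(a) t(b)`. -/
def IsAdInvariant (F H : Type*) [Field F] [Ring H] [HopfAlgebra F H]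
    (t : H →ₗ[F] F) : Prop :=
  ∀ a b : H,
    t ((LinearMap.mul' F H)
        ((TensorProduct.map (LinearMap.mulRight F b) (HopfAlgebra.antipode (R := F)))
          (Coalgebra.comul (R := F) a)))
      = Coalgebra.counit (R := F) a * t b

/-!
For `x ∈ N`, the condition `ρ x ∈ N ⊗ H` says that every contraction `(id ⊗ f)(ρ x)` lies in `N`,
i.e. that `⁅x₍₀₎, b⁆ ⊗ x₍₁₎ = 0` for all `b ∈ M`. The map `T = ⁅x₍₀₎, -⁆ ⊗ x₍₁₎ ·` on `L ⊗ H`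
commutes with right multiplication by `H` and kills `ρ(M)`, because `T (ρ c) = ρ⁅x, c⁆ = 0`.
Since `b ⊗ 1 = ρ(b₍₀₎) S(b₍₁₎)` with `b₍₀₎ ∈ M` by the antipode axiom, `T` also kills `b ⊗ 1`.
-/

section Contraction

variable {R V N : Type*} [CommRing R] [AddCommGroup V] [Module R V] [AddCommGroup N] [Module R N]

def rightContraction (f : N →ₗ[R] R) : V ⊗[R] N →ₗ[R] V :=
  (TensorProduct.rid R V).toLinearMap ∘ₗ f.lTensor V

@[simp]
lemma rightContraction_tmul (f : N →ₗ[R] R) (v : V) (n : N) :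
    rightContraction f (v ⊗ₜ[R] n) = f n • v := by
  simp [rightContraction]

lemma rightContraction_rTensor {V' : Type*} [AddCommGroup V'] [Module R V'] (g : V →ₗ[R] V')
    (f : N →ₗ[R] R) (t : V ⊗[R] N) :
    rightContraction f (g.rTensor N t) = g (rightContraction f t) := by
  have : rightContraction f ∘ₗ g.rTensor N = g ∘ₗ rightContraction f :=
    TensorProduct.ext' fun v n => by simp
  exact LinearMap.congr_fun this t

lemma eq_zero_of_forall_rightContraction_eq_zero [Module.Free R N] {t : V ⊗[R] N}
    (h : ∀ f : N →ₗ[R] R, rightContraction f t = 0) : t = 0 := by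
  classical
  let b := Module.Free.chooseBasis R N
  have coord_eq : ∀ (s : V ⊗[R] N) i,
      TensorProduct.equivFinsuppOfBasisRight b s i = rightContraction (b.coord i) s := by
    intro s i
    induction s using TensorProduct.induction_on with
    | zero => simp
    | tmul v n => simp
    | add s₁ s₂ h₁ h₂ => simp [h₁, h₂]
  apply (TensorProduct.equivFinsuppOfBasisRight b).injective
  ext i
  simp [coord_eq, h]

lemma mem_range_rTensor_subtype_of_forall_rightContraction_mem [Module.Free R N]
    (W : Submodule R V) {t : V ⊗[R] N} (h : ∀ f : N →ₗ[R] R, rightContraction f t ∈ W) :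
    t ∈ LinearMap.range (W.subtype.rTensor N) := by
  have hexact : Function.Exact (W.subtype.rTensor N) (W.mkQ.rTensor N) :=
    Module.Flat.rTensor_exact N (LinearMap.exact_subtype_mkQ W)
  refine (hexact t).mp (eq_zero_of_forall_rightContraction_eq_zero fun f => ?_)
  rw [rightContraction_rTensor, Submodule.mkQ_apply, Submodule.Quotient.mk_eq_zero]
  exact h f

end Contraction

section Comodule

variable {F H V : Type*} [Field F] [Ring H] [HopfAlgebra F H] [AddCommGroup V] [Module F V]

variable (F H V) in
/-- `(v ⊗ h) ⊗ k ↦ v ⊗ h S(k)`. -/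
def mulAntipode : (V ⊗[F] H) ⊗[F] H →ₗ[F] V ⊗[F] H :=
  (LinearMap.mul' F H ∘ₗ (HopfAlgebra.antipode F).lTensor H).lTensor V ∘ₗ
    (TensorProduct.assoc F V H H).toLinearMap

lemma mulAntipode_tmul (w : V ⊗[F] H) (k : H) :
    mulAntipode F H V (w ⊗ₜ[F] k)
      = (LinearMap.mulRight F (HopfAlgebra.antipode F k)).lTensor V w := by
  induction w using TensorProduct.induction_on with
  | zero => simp
  | tmul v h => simp [mulAntipode]
  | add w₁ w₂ h₁ h₂ => rw [add_tmul, map_add, h₁, h₂, map_add]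

lemma mulAntipode_comp_rTensor {T : V ⊗[F] H →ₗ[F] V ⊗[F] H}
    (hT : ∀ h : H, T ∘ₗ (LinearMap.mulRight F h).lTensor V
      = (LinearMap.mulRight F h).lTensor V ∘ₗ T) :
    mulAntipode F H V ∘ₗ T.rTensor H = T ∘ₗ mulAntipode F H V :=
  TensorProduct.ext' fun w k => by
    simp only [LinearMap.comp_apply, LinearMap.rTensor_tmul, mulAntipode_tmul]
    exact (LinearMap.congr_fun (hT _) w).symm

namespace HComodule

/-- In Sweedler notation, `v₍₀₎₍₀₎ ⊗ v₍₀₎₍₁₎ S(v₍₁₎) = v₍₀₎ ⊗ v₍₁₎₍₁₎ S(v₍₁₎₍₂₎) = v ⊗ 1`. -/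
lemma mulAntipode_rTensor_ρ_ρ (C : HComodule F H V) (v : V) :
    mulAntipode F H V ((C.ρ.rTensor H) (C.ρ v)) = v ⊗ₜ[F] 1 := by
  have hcounit : ((Algebra.linearMap F H ∘ₗ Coalgebra.counit).lTensor V) (C.ρ v)
      = v ⊗ₜ[F] 1 := by
    conv_rhs => rw [← C.counit v]
    induction C.ρ v using TensorProduct.induction_on with
    | zero => simp
    | tmul w h => simp [Algebra.algebraMap_eq_smul_one, tmul_smul, smul_tmul']
    | add w₁ w₂ h₁ h₂ => simp [h₁, h₂, add_tmul]
  calc mulAntipode F H V ((C.ρ.rTensor H) (C.ρ v))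
      = mulAntipode F H V ((TensorProduct.assoc F V H H).symm
          ((Coalgebra.comul.lTensor V) (C.ρ v))) := by
        rw [← C.coassoc v, LinearEquiv.symm_apply_apply]
    _ = ((LinearMap.mul' F H ∘ₗ (HopfAlgebra.antipode F).lTensor H ∘ₗ Coalgebra.comul).lTensor V)
          (C.ρ v) := by
        simp [mulAntipode, LinearMap.lTensor_comp]
    _ = v ⊗ₜ[F] 1 := by rw [HopfAlgebra.mul_antipode_lTensor_comul, hcounit]

/-- `w ⊗ 1 = ρ(w₍₀₎) S(w₍₁₎)` with `w₍₀₎ ∈ W`, and `T` commutes with the right action of `H`. -/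
lemma apply_tmul_one_eq_zero (C : HComodule F H V) {W : Submodule F V}
    (hW : C.IsHSubcomodule W) {T : V ⊗[F] H →ₗ[F] V ⊗[F] H}
    (hT : ∀ h : H, T ∘ₗ (LinearMap.mulRight F h).lTensor V
      = (LinearMap.mulRight F h).lTensor V ∘ₗ T)
    (hTρ : ∀ w ∈ W, T (C.ρ w) = 0) {w : V} (hw : w ∈ W) :
    T (w ⊗ₜ[F] 1) = 0 := by
  obtain ⟨u, hu⟩ := hW w hw
  have hTρW : T ∘ₗ C.ρ ∘ₗ W.subtype = 0 := LinearMap.ext fun w' => hTρ w' w'.2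
  rw [← C.mulAntipode_rTensor_ρ_ρ w, ← LinearMap.comp_apply T, ← mulAntipode_comp_rTensor hT,
    LinearMap.comp_apply, ← hu, ← LinearMap.rTensor_comp_apply, ← LinearMap.rTensor_comp_apply,
    LinearMap.comp_assoc, hTρW]
  simp

end HComodule

end Comodule

section LieTensor

variable {F H L : Type*} [Field F] [Ring H] [HopfAlgebra F H] [LieRing L] [LieAlgebra F L]

variable (F H L) in
/-- `(a ⊗ s, c ⊗ h) ↦ ⁅a, c⁆ ⊗ s h`. -/
def tensorBracket : L ⊗[F] H →ₗ[F] L ⊗[F] H →ₗ[F] L ⊗[F] H :=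
  (TensorProduct.mk F (L ⊗[F] H) (L ⊗[F] H)).compr₂
    (TensorProduct.map (bracketHom F L) (LinearMap.mul' F H) ∘ₗ
      (TensorProduct.tensorTensorTensorComm F L H L H).toLinearMap)

@[simp]
lemma tensorBracket_tmul_tmul (a c : L) (s h : H) :
    tensorBracket F H L (a ⊗ₜ[F] s) (c ⊗ₜ[F] h) = ⁅a, c⁆ ⊗ₜ[F] (s * h) := by
  simp [tensorBracket, bracketHom]

lemma HComoduleLieAlgebra.ρ_lie (C : HComoduleLieAlgebra F H L) (a b : L) :
    C.ρ ⁅a, b⁆ = tensorBracket F H L (C.ρ a) (C.ρ b) :=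
  C.compat a b

lemma tensorBracket_comp_lTensor_mulRight (q : L ⊗[F] H) (h : H) :
    tensorBracket F H L q ∘ₗ (LinearMap.mulRight F h).lTensor L
      = (LinearMap.mulRight F h).lTensor L ∘ₗ tensorBracket F H L q := by
  induction q using TensorProduct.induction_on with
  | zero => simp
  | tmul a s => exact TensorProduct.ext' fun c k => by simp [mul_assoc]
  | add q₁ q₂ h₁ h₂ => simp only [map_add, LinearMap.add_comp, LinearMap.comp_add, h₁, h₂]

lemma lie_rightContraction (f : H →ₗ[F] F) (q : L ⊗[F] H) (b : L) :
    ⁅rightContraction f q, b⁆ = rightContraction f (tensorBracket F H L q (b ⊗ₜ[F] 1)) := by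
  induction q using TensorProduct.induction_on with
  | zero => simp
  | tmul a s => simp [smul_lie]
  | add q₁ q₂ h₁ h₂ => simp [add_lie, h₁, h₂]

end LieTensor

/-- if `L` is an `H`-comodule Lie algebra and `M` is an `H`-subcomodule of `L`,
then the centralizer `N = {a ∈ L : ⁅a,b⁆ = 0 for all b ∈ M}` of `M` in `L` is an
`H`-subcomodule. -/
theorem centralizer_is_H_subcomodule
    (F H L : Type*) [Field F] [Ring H] [HopfAlgebra F H]
    [LieRing L] [LieAlgebra F L]
    (C : HComoduleLieAlgebra F H L)
    (M : Submodule F L) (hM : C.toHComodule.IsHSubcomodule M)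
    (N : Submodule F L) (hN : (N : Set L) = {a : L | ∀ b ∈ M, ⁅a, b⁆ = 0}) :
    C.toHComodule.IsHSubcomodule N := by
  have mem_N : ∀ a, a ∈ N ↔ ∀ b ∈ M, ⁅a, b⁆ = 0 := fun a => by
    rw [← SetLike.mem_coe, hN, Set.mem_ofPred_eq]
  intro x hx
  have bracket_ρ_eq_zero : ∀ b ∈ M, tensorBracket F H L (C.ρ x) (b ⊗ₜ[F] 1) = 0 :=
    fun b hb => C.apply_tmul_one_eq_zero hM (tensorBracket_comp_lTensor_mulRight _)
      (fun c hc => by rw [← C.ρ_lie, (mem_N x).mp hx c hc, map_zero]) hb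
  refine mem_range_rTensor_subtype_of_forall_rightContraction_mem N fun f => ?_
  rw [mem_N]
  intro b hb
  rw [lie_rightContraction, bracket_ρ_eq_zero b hb, map_zero]
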